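/- arXiv:1109.4648 — 2 statements merged into one kernel-verified Lean document; each statement's English description precedes it below -/
import Mathlib

section
/- Let A and B be d × d matrices over ℂ with A of rank one, and set 𝖠 = {A, B}. Then either ϱ(𝖠) = ρ(B), or there exists an integer n ≥ 0 such that ϱ(𝖠) = ρ(A·Bⁿ)^{1/(n+1)}. -/
/-!
Write `A = u vᵀ`. Then `A X A = tr (A X) • A`, so a product of `n` factors from `{A, B}` is
either `Bⁿ` or `c • Bᵃ A Bᵇ`, where `c` is a product of numbers `τₖ = tr (A Bᵏ)` with
`∑ (k + 1) = n - a - b - 1`; moreover `|τₖ| = ρ(A Bᵏ)`, the only possibly nonzero eigenvalue of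
the rank-one matrix `A Bᵏ`. Hence, if `ρ(B) ≤ r` and `|τₖ| ≤ r ^ (k + 1)` for all `k`, Gelfand's
formula for `B` bounds every such product by `K sⁿ` for each `s > r`, so `ϱ ≤ r`. Conversely
`ρ(B)` and every `ρ(A Bᵏ)^(1/(k+1))` are lower bounds for `ϱ`. Gelfand's formula also shows that
`ρ(A Bᵏ)^(1/(k+1))` is eventually below any `s > ρ(B)`; so either all these terms are at most
`ρ(B)` and `ϱ = ρ(B)`, or their supremum is attained and equals `ϱ`.
-/

noncomputable def matOpNorm {m : Type*} [Fintype m] [DecidableEq m] (A : Matrix m m ℂ) : ℝ :=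
  ‖Matrix.toEuclideanCLM (𝕜 := ℂ) A‖

noncomputable def specRad {m : Type*} [Fintype m] [DecidableEq m] (A : Matrix m m ℂ) : ℝ :=
  sSup ((fun z : ℂ => ‖z‖) '' spectrum ℂ A)

def prodSet {m : Type*} [Fintype m] [DecidableEq m] (S : Set (Matrix m m ℂ)) (n : ℕ) :
    Set (Matrix m m ℂ) :=
  { P | ∃ f : Fin n → Matrix m m ℂ, (∀ j, f j ∈ S) ∧ P = (List.ofFn f).prod }

noncomputable def jsr {m : Type*} [Fintype m] [DecidableEq m] (S : Set (Matrix m m ℂ)) : ℝ :=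
  ⨅ n : ℕ+, ⨆ P ∈ prodSet S (n : ℕ), matOpNorm P ^ (((n : ℕ) : ℝ)⁻¹)

open Filter Topology
-- Under this instance `‖M‖` is `matOpNorm M` by definition (`Matrix.cstar_norm_def`).
open scoped Pointwise Matrix.Norms.L2Operator

theorem eventually_mul_pow_le_pow (K : ℝ) {s s' : ℝ} (hs : 0 ≤ s) (hss' : s < s') :
    ∀ᶠ n : ℕ in atTop, K * s ^ n ≤ s' ^ n := by
  have hs' : 0 < s' := hs.trans_lt hss'
  have hlim : Tendsto (fun n : ℕ => K * (s / s') ^ n) atTop (𝓝 0) := by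
    simpa using (tendsto_pow_atTop_nhds_zero_of_lt_one (div_nonneg hs hs'.le)
      ((div_lt_one hs').2 hss')).const_mul K
  filter_upwards [hlim.eventually (gt_mem_nhds one_pos)] with n hn
  calc K * s ^ n = K * (s / s') ^ n * s' ^ n := by
        rw [mul_assoc, ← mul_pow, div_mul_cancel₀ _ hs'.ne']
    _ ≤ 1 * s' ^ n := by gcongr
    _ = s' ^ n := one_mul _

theorem exists_forall_le_of_eventually_le {f : ℕ → ℝ} {ρ : ℝ}
    (hf : ∀ s > ρ, ∀ᶠ k in atTop, f k ≤ s) {k₁ : ℕ} (hk₁ : ρ < f k₁) :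
    ∃ k₀, ∀ k, f k ≤ f k₀ := by
  obtain ⟨N, hN⟩ := eventually_atTop.1 (hf ((ρ + f k₁) / 2) (by linarith))
  obtain ⟨k₀, -, hk₀⟩ := (Finset.range (max N (k₁ + 1))).exists_max_image f
    ⟨k₁, Finset.mem_range.2 (by omega)⟩
  refine ⟨k₀, fun k => ?_⟩
  rcases lt_or_ge k (max N (k₁ + 1)) with hk | hk
  · exact hk₀ k (Finset.mem_range.2 hk)
  · calc f k ≤ (ρ + f k₁) / 2 := hN k (le_of_max_le_left hk)
      _ ≤ f k₁ := by linarith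
      _ ≤ f k₀ := hk₀ k₁ (Finset.mem_range.2 (by omega))

theorem le_biSup_of_finite {α β : Type*} [ConditionallyCompleteLattice β] [Nonempty β]
    {X : Set α} (hX : X.Finite) (f : α → β) {x : α} (hx : x ∈ X) : f x ≤ ⨆ y ∈ X, f y := by
  have hbdd : BddAbove (Set.range fun y => ⨆ _ : y ∈ X, f y) := by
    refine (((hX.image f).insert (sSup ∅)).bddAbove).mono ?_
    rintro _ ⟨y, rfl⟩
    by_cases hy : y ∈ X
    · simp [ciSup_pos hy, Set.mem_image_of_mem f hy]
    · simp [ciSup_eq_ite, hy]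
  calc f x = ⨆ _ : x ∈ X, f x := (ciSup_pos (f := fun _ => f x) hx).symm
    _ ≤ ⨆ y ∈ X, f y := le_ciSup hbdd x

theorem norm_le_pow_of_mem_pow {R : Type*} [SeminormedRing R] [NormOneClass R] {X : Set R}
    {c : ℝ} (hX : ∀ x ∈ X, ‖x‖ ≤ c) (j : ℕ) : ∀ x ∈ X ^ j, ‖x‖ ≤ c ^ j := by
  induction j with
  | zero => simp
  | succ j ih =>
    rintro _ ⟨y, hy, z, hz, rfl⟩
    calc ‖y * z‖ ≤ ‖y‖ * ‖z‖ := norm_mul_le y z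
      _ ≤ c ^ j * c := mul_le_mul (ih y hy) (hX z hz) (norm_nonneg z)
          ((norm_nonneg y).trans (ih y hy))
      _ = c ^ (j + 1) := (pow_succ c j).symm

theorem exists_norm_pow_le_mul_pow_of_spectralRadius_lt {A : Type*} [NormedRing A]
    [NormedAlgebra ℂ A] [CompleteSpace A] (a : A) {s : ℝ}
    (h : spectralRadius ℂ a < ENNReal.ofReal s) :
    ∃ C, ∀ n, ‖a ^ n‖ ≤ C * s ^ n := by
  have hs : 0 < s := ENNReal.ofReal_pos.1 (pos_of_gt h)
  have hev : ∀ᶠ n : ℕ in atTop, ‖a ^ n‖ / s ^ n ≤ 1 := by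
    have gelfand := spectrum.pow_norm_pow_one_div_tendsto_nhds_spectralRadius a
    filter_upwards [gelfand.eventually_lt_const h, eventually_ge_atTop 1] with n hn hn1
    have hlt : ‖a ^ n‖ ^ (1 / n : ℝ) < s :=
      (ENNReal.ofReal_lt_ofReal_iff hs).1 hn
    have hpow := pow_lt_pow_left₀ hlt (by positivity) (Nat.one_le_iff_ne_zero.1 hn1)
    rw [← Real.rpow_natCast, ← Real.rpow_mul (norm_nonneg _), one_div,
      inv_mul_cancel₀ (by positivity), Real.rpow_one] at hpow
    exact (div_le_one (by positivity)).2 hpow.le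
  obtain ⟨C, hC⟩ := (isBoundedUnder_of_eventually_le hev).bddAbove_range
  exact ⟨C, fun n => (div_le_iff₀ (by positivity)).1 (hC ⟨n, rfl⟩)⟩

namespace Matrix

theorem exists_vecMulVec_eq_of_rank_eq_one {K m n : Type*} [Field K] [Fintype n]
    {A : Matrix m n K} (hA : A.rank = 1) : ∃ u v, A = vecMulVec u v := by
  classical
  obtain ⟨⟨u, hu_mem⟩, -, hu⟩ := finrank_eq_one_iff'.1 (show Module.finrank K
    (LinearMap.range A.mulVecLin) = 1 from hA)
  choose c hc using fun j => hu ⟨A *ᵥ Pi.single j 1, LinearMap.mem_range_self A.mulVecLin _⟩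
  refine ⟨u, c, ext fun i j => ?_⟩
  have hcol := congr_fun (congr_arg Subtype.val (hc j)) i
  simp only [SetLike.val_smul, Pi.smul_apply, smul_eq_mul, mulVec_single_one] at hcol
  rw [vecMulVec_apply, mul_comm, hcol, col_apply]

variable {m : Type*} [Fintype m]

theorem vecMulVec_mul_mul_vecMulVec (u v : m → ℂ) (X : Matrix m m ℂ) :
    vecMulVec u v * X * vecMulVec u v = trace (vecMulVec u v * X) • vecMulVec u v := by
  rw [vecMulVec_mul, vecMulVec_mul_vecMulVec, trace_vecMulVec, vecMulVec_smul, dotProduct_comm]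

theorem isRoot_charpoly_vecMulVec_iff [DecidableEq m] [Nonempty m] (u v : m → ℂ) {z : ℂ} :
    (vecMulVec u v).charpoly.IsRoot z ↔ z ^ (Fintype.card m - 1) * (z - u ⬝ᵥ v) = 0 := by
  obtain ⟨k, hk⟩ := Nat.exists_eq_add_one_of_ne_zero (Fintype.card_ne_zero (α := m))
  simp only [charpoly_vecMulVec, hk, Polynomial.IsRoot.def, Polynomial.eval_sub,
    Polynomial.eval_smul, Polynomial.eval_pow, Polynomial.eval_X, smul_eq_mul,
    Nat.add_sub_cancel]
  constructor <;> intro h <;> linear_combination h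

theorem spectrum_vecMulVec_subset [DecidableEq m] [Nonempty m] (u v : m → ℂ) :
    spectrum ℂ (vecMulVec u v) ⊆ {0, u ⬝ᵥ v} := by
  intro z hz
  rw [mem_spectrum_iff_isRoot_charpoly, isRoot_charpoly_vecMulVec_iff] at hz
  rcases mul_eq_zero.1 hz with h | h
  · exact Or.inl (pow_eq_zero_iff'.1 h).1
  · exact Or.inr (sub_eq_zero.1 h)

theorem dotProduct_mem_spectrum_vecMulVec [DecidableEq m] [Nonempty m] (u v : m → ℂ) :
    u ⬝ᵥ v ∈ spectrum ℂ (vecMulVec u v) := by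
  rw [mem_spectrum_iff_isRoot_charpoly, isRoot_charpoly_vecMulVec_iff, sub_self, mul_zero]

end Matrix

section SpectralRadius

variable {m : Type*} [Fintype m] [DecidableEq m]

theorem norm_le_specRad {M : Matrix m m ℂ} {z : ℂ} (hz : z ∈ spectrum ℂ M) :
    ‖z‖ ≤ specRad M :=
  le_csSup ((spectrum.isCompact M).image continuous_norm).bddAbove ⟨z, hz, rfl⟩

theorem exists_norm_eq_specRad [Nonempty m] (M : Matrix m m ℂ) :
    ∃ z ∈ spectrum ℂ M, ‖z‖ = specRad M :=
  ((spectrum.isCompact M).image continuous_norm).sSup_mem ((spectrum.nonempty M).image _)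

theorem specRad_nonneg (M : Matrix m m ℂ) : 0 ≤ specRad M :=
  Real.sSup_nonneg fun _ ⟨z, _, hz⟩ => hz ▸ norm_nonneg z

theorem specRad_pow_le_norm_pow [Nonempty m] (M : Matrix m m ℂ) (n : ℕ) :
    specRad M ^ n ≤ ‖M ^ n‖ := by
  obtain ⟨z, hz, hz_eq⟩ := exists_norm_eq_specRad M
  rw [← hz_eq, ← norm_pow]
  exact spectrum.norm_le_norm_of_mem (spectrum.pow_mem_pow M n hz)

theorem spectralRadius_le_ofReal_specRad (M : Matrix m m ℂ) :
    spectralRadius ℂ M ≤ ENNReal.ofReal (specRad M) :=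
  iSup₂_le fun z hz => by
    rw [← enorm_eq_nnnorm, ← ofReal_norm]
    exact ENNReal.ofReal_le_ofReal (norm_le_specRad hz)

theorem exists_norm_pow_le_mul_pow_of_specRad_lt (M : Matrix m m ℂ) {s : ℝ}
    (h : specRad M < s) : ∃ C, ∀ n, ‖M ^ n‖ ≤ C * s ^ n :=
  exists_norm_pow_le_mul_pow_of_spectralRadius_lt M <| (spectralRadius_le_ofReal_specRad M).trans_lt
    ((ENNReal.ofReal_lt_ofReal_iff ((specRad_nonneg M).trans_lt h)).2 h)

theorem specRad_vecMulVec [Nonempty m] (u v : m → ℂ) :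
    specRad (Matrix.vecMulVec u v) = ‖u ⬝ᵥ v‖ := by
  refine le_antisymm ?_ (norm_le_specRad (Matrix.dotProduct_mem_spectrum_vecMulVec u v))
  obtain ⟨z, hz, hz_eq⟩ := exists_norm_eq_specRad (Matrix.vecMulVec u v)
  rcases Matrix.spectrum_vecMulVec_subset u v hz with rfl | rfl
  · simp [← hz_eq]
  · exact hz_eq.ge

end SpectralRadius

section JointSpectralRadius

variable {m : Type*} [Fintype m] [DecidableEq m]

theorem prodSet_eq_pow (S : Set (Matrix m m ℂ)) (n : ℕ) : prodSet S n = S ^ n := by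
  ext P
  rw [Set.mem_pow]
  constructor
  · rintro ⟨f, hf, rfl⟩
    exact ⟨fun i => ⟨f i, hf i⟩, rfl⟩
  · rintro ⟨f, rfl⟩
    exact ⟨fun i => f i, fun i => (f i).2, rfl⟩

theorem jsr_le_of_norm_le (S : Set (Matrix m m ℂ)) {K s : ℝ} (hs : 0 ≤ s)
    (h : ∀ n, ∀ P ∈ S ^ n, ‖P‖ ≤ K * s ^ n) : jsr S ≤ s := by
  refine le_of_forall_gt_imp_ge_of_dense fun s' hs' => ?_
  obtain ⟨n, hn, hn1⟩ := ((eventually_mul_pow_le_pow K hs hs').and (eventually_ge_atTop 1)).exists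
  have hs'0 : 0 ≤ s' := hs.trans hs'.le
  have hn0 : n ≠ 0 := by omega
  calc jsr S ≤ ⨆ P ∈ prodSet S n, matOpNorm P ^ ((n : ℝ)⁻¹) := by
        unfold jsr
        exact ciInf_le ⟨0, Set.forall_mem_range.2 fun _ => Real.iSup_nonneg fun _ =>
          Real.iSup_nonneg fun _ => Real.rpow_nonneg (norm_nonneg _) _⟩ (⟨n, by omega⟩ : ℕ+)
    _ ≤ s' := by
        refine Real.iSup_le (fun P => Real.iSup_le (fun hP => ?_) hs'0) hs'0
        rw [prodSet_eq_pow] at hP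
        calc matOpNorm P ^ ((n : ℝ)⁻¹) ≤ (s' ^ n) ^ ((n : ℝ)⁻¹) :=
              Real.rpow_le_rpow (norm_nonneg _) ((h n P hP).trans hn) (by positivity)
          _ = s' := Real.pow_rpow_inv_natCast hs'0 hn0

theorem specRad_rpow_inv_le_jsr [Nonempty m] {S : Set (Matrix m m ℂ)} (hS : S.Finite)
    {k : ℕ} (hk : k ≠ 0) {P : Matrix m m ℂ} (hP : P ∈ S ^ k) :
    specRad P ^ ((k : ℝ)⁻¹) ≤ jsr S := by
  refine le_ciInf fun n => ?_
  set T := ⨆ Q ∈ prodSet S n, matOpNorm Q ^ (((n : ℕ) : ℝ)⁻¹)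
  have hT : 0 ≤ T :=
    Real.iSup_nonneg fun _ => Real.iSup_nonneg fun _ => Real.rpow_nonneg (norm_nonneg _) _
  have hfin : (prodSet S n).Finite := by
    rw [prodSet_eq_pow, ← hS.coe_toFinset, ← Finset.coe_pow]
    exact Finset.finite_toSet _
  have hnorm : ∀ Q ∈ S ^ (n : ℕ), ‖Q‖ ≤ T ^ (n : ℕ) := by
    intro Q hQ
    have hQT : ‖Q‖ ^ (((n : ℕ) : ℝ)⁻¹) ≤ T :=
      le_biSup_of_finite hfin
        (fun Q => matOpNorm Q ^ (((n : ℕ) : ℝ)⁻¹)) (by rwa [prodSet_eq_pow])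
    calc ‖Q‖ = (‖Q‖ ^ (((n : ℕ) : ℝ)⁻¹)) ^ (n : ℕ) :=
          (Real.rpow_inv_natCast_pow (norm_nonneg Q) n.ne_zero).symm
      _ ≤ T ^ (n : ℕ) := by gcongr
  have hPn : P ^ (n : ℕ) ∈ (S ^ (n : ℕ)) ^ k := by
    rw [← pow_mul, mul_comm, pow_mul]
    exact Set.pow_mem_pow hP
  have hρ : (specRad P ^ ((k : ℝ)⁻¹)) ^ ((n : ℕ) * k) ≤ T ^ ((n : ℕ) * k) :=
    calc (specRad P ^ ((k : ℝ)⁻¹)) ^ ((n : ℕ) * k) = specRad P ^ (n : ℕ) := by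
          rw [mul_comm, pow_mul, Real.rpow_inv_natCast_pow (specRad_nonneg P) hk]
      _ ≤ ‖P ^ (n : ℕ)‖ := specRad_pow_le_norm_pow P n
      _ ≤ (T ^ (n : ℕ)) ^ k := norm_le_pow_of_mem_pow hnorm k _ hPn
      _ = T ^ ((n : ℕ) * k) := (pow_mul T _ _).symm
  exact (pow_le_pow_iff_left₀ (Real.rpow_nonneg (specRad_nonneg P) _) hT
    (mul_ne_zero n.ne_zero hk)).1 hρ

end JointSpectralRadius

section PairWords

variable {𝕜 R : Type*} [NormedField 𝕜] {A B : R} {τ : ℕ → 𝕜} {s : ℝ}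

theorem mem_pair_pow_cases [Ring R] [Algebra 𝕜 R] (hτ : ∀ k, A * B ^ k * A = τ k • A)
    (hτs : ∀ k, ‖τ k‖ ≤ s ^ (k + 1)) {n : ℕ} {P : R} (hP : P ∈ ({A, B} : Set R) ^ n) :
    P = B ^ n ∨
      ∃ (c : 𝕜) (a b j : ℕ), n = a + 1 + b + j ∧ ‖c‖ ≤ s ^ j ∧ P = c • (B ^ a * A * B ^ b) := by
  induction n generalizing P with
  | zero => exact Or.inl (by simpa using hP)
  | succ n ih =>
    rw [pow_succ'] at hP
    obtain ⟨F, hF, Q, hQ, rfl⟩ := hP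
    rcases ih hQ with rfl | ⟨c, a, b, j, rfl, hc, rfl⟩ <;>
      rcases hF with rfl | rfl
    · exact Or.inr ⟨1, 0, n, 0, by omega, by simp, by simp⟩
    · exact Or.inl (pow_succ' F n).symm
    · refine Or.inr ⟨c * τ a, 0, b, j + (a + 1), by omega, ?_, ?_⟩
      · rw [norm_mul, pow_add]
        exact mul_le_mul hc (hτs a) (norm_nonneg _) ((norm_nonneg c).trans hc)
      · dsimp only
        rw [mul_smul_comm, ← mul_assoc, ← mul_assoc, hτ a, smul_mul_assoc, smul_smul, pow_zero,
          one_mul]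
    · refine Or.inr ⟨c, a + 1, b, j, by omega, hc, ?_⟩
      dsimp only
      rw [mul_smul_comm, ← mul_assoc, ← mul_assoc, ← pow_succ']

theorem norm_le_of_mem_pair_pow [NormedRing R] [NormedAlgebra 𝕜 R]
    (hτ : ∀ k, A * B ^ k * A = τ k • A) (hτs : ∀ k, ‖τ k‖ ≤ s ^ (k + 1)) (hs : 0 < s)
    {C : ℝ} (hB : ∀ k, ‖B ^ k‖ ≤ C * s ^ k) {n : ℕ} {P : R}
    (hP : P ∈ ({A, B} : Set R) ^ n) : ‖P‖ ≤ (C + C ^ 2 * ‖A‖ / s) * s ^ n := by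
  have hC : 0 ≤ C := by simpa using (norm_nonneg _).trans (hB 0)
  rcases mem_pair_pow_cases hτ hτs hP with rfl | ⟨c, a, b, j, rfl, hc, rfl⟩
  · calc ‖B ^ n‖ ≤ C * s ^ n := hB n
      _ ≤ (C + C ^ 2 * ‖A‖ / s) * s ^ n := by gcongr; exact le_add_of_nonneg_right (by positivity)
  · have hword : ‖B ^ a * A * B ^ b‖ ≤ C * s ^ a * ‖A‖ * (C * s ^ b) :=
      norm_mul₃_le.trans (by gcongr <;> exact hB _)
    calc ‖c • (B ^ a * A * B ^ b)‖ = ‖c‖ * ‖B ^ a * A * B ^ b‖ := norm_smul c _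
      _ ≤ s ^ j * (C * s ^ a * ‖A‖ * (C * s ^ b)) := by gcongr
      _ = C ^ 2 * ‖A‖ / s * s ^ (a + 1 + b + j) := by field_simp; ring
      _ ≤ (C + C ^ 2 * ‖A‖ / s) * s ^ (a + 1 + b + j) := by
        gcongr; exact le_add_of_nonneg_left hC

end PairWords

section RankOnePair

variable {m : Type*} [Fintype m] [DecidableEq m]

theorem jsr_pair_le {A B : Matrix m m ℂ} {τ : ℕ → ℂ} (hτ : ∀ k, A * B ^ k * A = τ k • A)
    {r : ℝ} (hr : 0 ≤ r) (hB : specRad B ≤ r) (hτr : ∀ k, ‖τ k‖ ≤ r ^ (k + 1)) :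
    jsr {A, B} ≤ r := by
  refine le_of_forall_gt_imp_ge_of_dense fun s hrs => ?_
  have hs : 0 < s := hr.trans_lt hrs
  obtain ⟨C, hC⟩ := exists_norm_pow_le_mul_pow_of_specRad_lt B (hB.trans_lt hrs)
  exact jsr_le_of_norm_le _ hs.le fun n P hP => norm_le_of_mem_pair_pow hτ
    (fun k => (hτr k).trans (pow_le_pow_left₀ hr hrs.le _)) hs hC hP

theorem eventually_specRad_mul_pow_rpow_le [Nonempty m] (A : Matrix m m ℂ) {B : Matrix m m ℂ}
    {s : ℝ}
    (hs : specRad B < s) : ∀ᶠ k : ℕ in atTop, specRad (A * B ^ k) ^ (((k : ℝ) + 1)⁻¹) ≤ s := by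
  obtain ⟨s', hBs', hs's⟩ := exists_between hs
  have hs'0 : 0 < s' := (specRad_nonneg B).trans_lt hBs'
  have hs0 : 0 < s := hs'0.trans hs's
  obtain ⟨C, hC⟩ := exists_norm_pow_le_mul_pow_of_specRad_lt B hBs'
  filter_upwards [eventually_mul_pow_le_pow (‖A‖ * C / s) hs'0.le hs's] with k hk
  have hAB : specRad (A * B ^ k) ≤ s ^ (k + 1) :=
    calc specRad (A * B ^ k) ≤ ‖A * B ^ k‖ := by
          simpa using specRad_pow_le_norm_pow (A * B ^ k) 1
      _ ≤ ‖A‖ * (C * s' ^ k) := (norm_mul_le _ _).trans (by gcongr; exact hC k)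
      _ = ‖A‖ * C / s * s' ^ k * s := by field_simp
      _ ≤ s ^ k * s := by gcongr
      _ = s ^ (k + 1) := (pow_succ s k).symm
  calc specRad (A * B ^ k) ^ (((k : ℝ) + 1)⁻¹) ≤ (s ^ (k + 1)) ^ (((k + 1 : ℕ) : ℝ)⁻¹) := by
        push_cast
        exact Real.rpow_le_rpow (specRad_nonneg _) hAB (by positivity)
    _ = s := Real.pow_rpow_inv_natCast hs0.le k.succ_ne_zero

theorem jsr_pair_eq_of_mul_pow_mul [Nonempty m] {A B : Matrix m m ℂ} {τ : ℕ → ℂ}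
    (hτ : ∀ k, A * B ^ k * A = τ k • A) (hspec : ∀ k, specRad (A * B ^ k) = ‖τ k‖) :
    jsr {A, B} = specRad B ∨
      ∃ n : ℕ, jsr {A, B} = specRad (A * B ^ n) ^ (((n : ℝ) + 1)⁻¹) := by
  set f : ℕ → ℝ := fun k => specRad (A * B ^ k) ^ (((k : ℝ) + 1)⁻¹)
  have hfin : ({A, B} : Set (Matrix m m ℂ)).Finite := Set.toFinite _
  have hB_le : specRad B ≤ jsr {A, B} := by
    simpa using specRad_rpow_inv_le_jsr hfin one_ne_zero (P := B) (by simp)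
  have hf_le : ∀ k, f k ≤ jsr {A, B} := fun k => by
    have hmem : A * B ^ k ∈ ({A, B} : Set (Matrix m m ℂ)) ^ (k + 1) := by
      rw [pow_succ']
      exact Set.mul_mem_mul (by simp) (Set.pow_mem_pow (by simp))
    simpa [f] using specRad_rpow_inv_le_jsr hfin k.succ_ne_zero hmem
  have hle : ∀ r, specRad B ≤ r → (∀ k, f k ≤ r) → jsr {A, B} ≤ r := fun r hB hf =>
    jsr_pair_le hτ ((specRad_nonneg B).trans hB) hB fun k => by
      rw [← hspec k, ← Real.rpow_inv_natCast_pow (specRad_nonneg _) k.succ_ne_zero]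
      exact pow_le_pow_left₀ (Real.rpow_nonneg (specRad_nonneg _) _) (by simpa [f] using hf k) _
  by_cases h : ∀ k, f k ≤ specRad B
  · exact Or.inl (le_antisymm (hle _ le_rfl h) hB_le)
  · obtain ⟨k₁, hk₁⟩ := not_forall.1 h
    obtain ⟨k₀, hk₀⟩ := exists_forall_le_of_eventually_le
      (fun s hs => eventually_specRad_mul_pow_rpow_le A hs) (not_le.1 hk₁)
    exact Or.inr ⟨k₀, le_antisymm (hle _ ((not_le.1 hk₁).le.trans (hk₀ k₁)) hk₀) (hf_le k₀)⟩

end RankOnePair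

theorem stmt3 {d : ℕ} (A B : Matrix (Fin d) (Fin d) ℂ) (hA : A.rank = 1) :
    jsr {A, B} = specRad B ∨
      ∃ n : ℕ, jsr {A, B} = specRad (A * B ^ n) ^ (((n : ℝ) + 1)⁻¹) := by
  have : Nonempty (Fin d) :=
    Fin.pos_iff_nonempty.1 (by simpa [hA] using A.rank_le_card_width : 1 ≤ d)
  obtain ⟨u, v, rfl⟩ := Matrix.exists_vecMulVec_eq_of_rank_eq_one hA
  refine jsr_pair_eq_of_mul_pow_mul (fun k => Matrix.vecMulVec_mul_mul_vecMulVec u v _)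
    fun k => ?_
  rw [Matrix.vecMulVec_mul, specRad_vecMulVec, Matrix.trace_vecMulVec]
end

section
/- Let ‖·‖ be the operator norm on d × d complex matrices induced by some norm on ℂ^d. Let A be a d × d complex matrix of rank one with ‖A‖ ≤ 1, let R be a d × d complex matrix, and set Q = A·R. If ‖Q‖ ≤ 1 and ‖Q·A‖ = 1, then ρ(Q) = 1; indeed there exists a nonzero vector v ∈ ℂ^d and a complex number λ with |λ| = 1 such that Q·v = λ·v. -/
open scoped BigOperators

/-- `ν` is a norm on `ℂ^d`. -/
structure IsNorm {d : ℕ} (ν : (Fin d → ℂ) → ℝ) : Prop where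
  eq_zero_iff : ∀ x, ν x = 0 ↔ x = 0
  smul : ∀ (a : ℂ) (x : Fin d → ℂ), ν (a • x) = ‖a‖ * ν x
  triangle : ∀ x y, ν (x + y) ≤ ν x + ν y

/-- The operator norm on `d × d` matrices induced by a norm `ν` on `ℂ^d`:
the supremum of `ν (M v)` over unit vectors `v`. -/
noncomputable def opNormWrt {d : ℕ} (ν : (Fin d → ℂ) → ℝ)
    (M : Matrix (Fin d) (Fin d) ℂ) : ℝ :=
  sSup ((fun v => ν (M.mulVec v)) '' {v | ν v = 1})

/-!
The range of `A` is a line `ℂ x`, so `Q = A R` maps `x` to `c • x` for some `c`, and `Q A = c A`.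
Hence `1 = ‖Q A‖ ≤ ‖c‖ ‖A‖ ≤ ‖c‖`, while every eigenvalue of `Q`, `c` included, has modulus at
most `‖Q‖ ≤ 1`. So `c` is an eigenvalue of modulus one and no eigenvalue is larger.
-/

open Matrix

namespace Matrix

variable {K m n : Type*} [Field K] [Fintype n]

theorem exists_mulVec_eq_smul_of_rank_eq_one {A : Matrix m n K} (hA : A.rank = 1) :
    ∃ x ≠ 0, ∀ v, ∃ α : K, A *ᵥ v = α • x := by
  obtain ⟨⟨x, _⟩, hx0, hspan⟩ := finrank_eq_one_iff'.mp hA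
  refine ⟨x, fun h => hx0 (Subtype.ext h), fun v => ?_⟩
  obtain ⟨α, hα⟩ := hspan ⟨A *ᵥ v, v, rfl⟩
  exact ⟨α, (congrArg Subtype.val hα).symm⟩

variable [DecidableEq n]

theorem mem_spectrum_iff_exists_mulVec_eq_smul {M : Matrix n n K} {μ : K} :
    μ ∈ spectrum K M ↔ ∃ v, v ≠ 0 ∧ M *ᵥ v = μ • v := by
  simp only [← spectrum_toLin', ← Module.End.hasEigenvalue_iff_mem_spectrum,
    Module.End.hasEigenvalue_iff, Submodule.ne_bot_iff, Module.End.mem_eigenspace_iff,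
    toLin'_apply]
  exact ⟨fun ⟨v, hv, hv0⟩ => ⟨v, hv0, hv⟩, fun ⟨v, hv0, hv⟩ => ⟨v, hv, hv0⟩⟩

end Matrix

theorem specRad_eq_of_mem_spectrum {ι : Type*} [Fintype ι] [DecidableEq ι] {M : Matrix ι ι ℂ}
    {μ : ℂ} {r : ℝ} (hμ : μ ∈ spectrum ℂ M) (hμr : ‖μ‖ = r) (hle : ∀ z ∈ spectrum ℂ M, ‖z‖ ≤ r) :
    specRad M = r :=
  IsGreatest.csSup_eq ⟨⟨μ, hμ, hμr⟩, by rintro _ ⟨z, hz, rfl⟩; exact hle z hz⟩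

/-- `ℂ^d` carrying the norm `ν`, as a type synonym so as not to clash with the sup norm. -/
def WithNorm {d : ℕ} (_ν : (Fin d → ℂ) → ℝ) : Type := Fin d → ℂ

namespace WithNorm

variable {d : ℕ} {ν : (Fin d → ℂ) → ℝ}

instance : AddCommGroup (WithNorm ν) := inferInstanceAs (AddCommGroup (Fin d → ℂ))

instance : Module ℂ (WithNorm ν) := inferInstanceAs (Module ℂ (Fin d → ℂ))

instance : FiniteDimensional ℂ (WithNorm ν) := inferInstanceAs (FiniteDimensional ℂ (Fin d → ℂ))

instance : Norm (WithNorm ν) := ⟨ν⟩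

end WithNorm

namespace IsNorm

variable {d : ℕ} {ν : (Fin d → ℂ) → ℝ}

lemma map_zero (hν : IsNorm ν) : ν 0 = 0 := by
  simpa using hν.smul 0 0

lemma nonneg (hν : IsNorm ν) (x : Fin d → ℂ) : 0 ≤ ν x := by
  have h := hν.triangle x ((-1 : ℂ) • x)
  rw [hν.smul, neg_one_smul, add_neg_cancel, hν.map_zero] at h
  simp only [norm_neg, norm_one, one_mul] at h
  linarith

lemma pos (hν : IsNorm ν) {x : Fin d → ℂ} (hx : x ≠ 0) : 0 < ν x :=
  (hν.nonneg x).lt_of_ne fun h => hx ((hν.eq_zero_iff x).mp h.symm)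

lemma normedSpaceCore (hν : IsNorm ν) : NormedSpace.Core ℂ (WithNorm ν) where
  norm_nonneg := hν.nonneg
  norm_smul := hν.smul
  norm_triangle := hν.triangle
  norm_eq_zero_iff := hν.eq_zero_iff

-- `(ℂ^d, ν)` is a finite-dimensional normed space, on which every linear map is continuous.
theorem exists_mulVec_le (hν : IsNorm ν) (M : Matrix (Fin d) (Fin d) ℂ) :
    ∃ C, ∀ v, ν (M *ᵥ v) ≤ C * ν v := by
  let := NormedAddCommGroup.ofCore hν.normedSpaceCore
  let := NormedSpace.ofCore hν.normedSpaceCore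
  let f : WithNorm ν →L[ℂ] WithNorm ν := LinearMap.toContinuousLinearMap M.mulVecLin
  exact ⟨‖f‖, f.le_opNorm⟩

lemma le_opNormWrt (hν : IsNorm ν) (M : Matrix (Fin d) (Fin d) ℂ) {v : Fin d → ℂ}
    (hv : ν v = 1) : ν (M *ᵥ v) ≤ opNormWrt ν M := by
  obtain ⟨C, hC⟩ := hν.exists_mulVec_le M
  refine le_csSup ⟨C, ?_⟩ ⟨v, hv, rfl⟩
  rintro _ ⟨u, hu, rfl⟩
  simpa [show ν u = 1 from hu] using hC u

lemma mulVec_le_opNormWrt_mul (hν : IsNorm ν) (M : Matrix (Fin d) (Fin d) ℂ)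
    (v : Fin d → ℂ) : ν (M *ᵥ v) ≤ opNormWrt ν M * ν v := by
  rcases eq_or_ne v 0 with rfl | hv
  · simp [hν.map_zero]
  have hνv := hν.pos hv
  have hscale : ‖((ν v : ℂ))⁻¹‖ = (ν v)⁻¹ := by
    rw [norm_inv, Complex.norm_real, Real.norm_of_nonneg hνv.le]
  have hu : ν ((ν v : ℂ)⁻¹ • v) = 1 := by
    rw [hν.smul, hscale, inv_mul_cancel₀ hνv.ne']
  have h := hν.le_opNormWrt M hu
  rwa [Matrix.mulVec_smul, hν.smul, hscale, inv_mul_le_iff₀ hνv, mul_comm] at h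

lemma norm_le_opNormWrt_of_mem_spectrum (hν : IsNorm ν) {M : Matrix (Fin d) (Fin d) ℂ} {μ : ℂ}
    (hμ : μ ∈ spectrum ℂ M) : ‖μ‖ ≤ opNormWrt ν M := by
  obtain ⟨v, hv0, hv⟩ := Matrix.mem_spectrum_iff_exists_mulVec_eq_smul.mp hμ
  have h := hν.mulVec_le_opNormWrt_mul M v
  rwa [hv, hν.smul, mul_le_mul_iff_left₀ (hν.pos hv0)] at h

end IsNorm

lemma opNormWrt_le {d : ℕ} {ν : (Fin d → ℂ) → ℝ} {M : Matrix (Fin d) (Fin d) ℂ} {C : ℝ}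
    (hC : 0 ≤ C) (h : ∀ v, ν v = 1 → ν (M *ᵥ v) ≤ C) : opNormWrt ν M ≤ C :=
  Real.sSup_le (by rintro _ ⟨v, hv, rfl⟩; exact h v hv) hC

theorem stmt6 {d : ℕ} (ν : (Fin d → ℂ) → ℝ) (hν : IsNorm ν)
    (A R : Matrix (Fin d) (Fin d) ℂ) (hArank : A.rank = 1)
    (hA : opNormWrt ν A ≤ 1)
    (Q : Matrix (Fin d) (Fin d) ℂ) (hQ : Q = A * R)
    (hQnorm : opNormWrt ν Q ≤ 1) (hQA : opNormWrt ν (Q * A) = 1) :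
    specRad Q = 1 ∧
      ∃ (v : Fin d → ℂ) (lam : ℂ), v ≠ 0 ∧ ‖lam‖ = 1 ∧ Q.mulVec v = lam • v := by
  obtain ⟨x, hx0, hA_range⟩ := exists_mulVec_eq_smul_of_rank_eq_one hArank
  obtain ⟨c, hc⟩ := hA_range (R *ᵥ x)
  have hQx : Q *ᵥ x = c • x := by rw [hQ, ← mulVec_mulVec, hc]
  have hc_spec : c ∈ spectrum ℂ Q := mem_spectrum_iff_exists_mulVec_eq_smul.mpr ⟨x, hx0, hQx⟩
  have hspec_le : ∀ μ ∈ spectrum ℂ Q, ‖μ‖ ≤ 1 := fun μ hμ =>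
    (hν.norm_le_opNormWrt_of_mem_spectrum hμ).trans hQnorm
  have hQA_mulVec : ∀ v, (Q * A) *ᵥ v = c • A *ᵥ v := fun v => by
    obtain ⟨α, hα⟩ := hA_range v
    rw [← mulVec_mulVec, hα, mulVec_smul, hQx, smul_comm]
  have hc_ge : 1 ≤ ‖c‖ := hQA ▸ opNormWrt_le (norm_nonneg c) fun v hv => by
    rw [hQA_mulVec, hν.smul]
    exact mul_le_of_le_one_right (norm_nonneg c) ((hν.le_opNormWrt A hv).trans hA)
  have hc1 : ‖c‖ = 1 := le_antisymm (hspec_le c hc_spec) hc_ge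
  exact ⟨specRad_eq_of_mem_spectrum hc_spec hc1 hspec_le, x, c, hx0, hc1, hQx⟩
end
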